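/- McCarty realizability validates the pairing axiom: there is a natural number e such that for all trees a, b in the realizability universe V, e realizes the statement ∃x ∀y (y ε x ↔ (y = a ∨ y = b)). -/
import Mathlib


/-- Kleene application: evaluate the partial recursive function with code `n` at `m`. -/
def kapp (n m : ℕ) : Part ℕ := (Denumerable.ofNat Nat.Partrec.Code n).eval m

/-- McCarty's realizability universe: well-founded trees `sup(S)` where `S` is a
set of pairs `(m, v)` with `m ∈ ℕ` and `v` a tree (presented by an indexed family). -/
inductive V : Type 1
  | sup : (I : Type) → (I → ℕ × V) → V

/-- The set of labelled edges into (the root of) a tree. -/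
def V.E : V → Set (ℕ × V)
  | V.sup _ t => Set.range t

mutual
  /-- `RMem n x w`: `n ⊩ x ε w`, i.e. there is `(m, v) ∈ E(w)` with `n₀ = m` and
  `n₁ ⊩ x = v`. -/
  inductive RMem : ℕ → V → V → Prop
    | intro (n : ℕ) (x w v : V) (h : (n.unpair.1, v) ∈ w.E)
        (h2 : REq n.unpair.2 x v) : RMem n x w
  /-- `REq n w w'`: `n ⊩ w = w'`, i.e. for all `(m, v) ∈ E(w)`, `n₀(m)` is defined and
  `n₀(m) ⊩ v ε w'`, and for all `(m', v') ∈ E(w')`, `n₁(m')` is defined and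
  `n₁(m') ⊩ v' ε w`. -/
  inductive REq : ℕ → V → V → Prop
    | intro (n : ℕ) (w w' : V)
        (d1 : ∀ m v, (m, v) ∈ w.E → (kapp n.unpair.1 m).Dom)
        (h1 : ∀ m v (h : (m, v) ∈ w.E),
          RMem ((kapp n.unpair.1 m).get (d1 m v h)) v w')
        (d2 : ∀ m' v', (m', v') ∈ w'.E → (kapp n.unpair.2 m').Dom)
        (h2 : ∀ m' v' (h : (m', v') ∈ w'.E),
          RMem ((kapp n.unpair.2 m').get (d2 m' v' h)) v' w) :
        REq n w w'
end

/-- Kleene realizability of an implication between two abstractly realized statements: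
`n ⊩ φ → ψ` iff for every `m ⊩ φ`, `n(m)` is defined and `n(m) ⊩ ψ`. -/
def RImp (P Q : ℕ → Prop) (n : ℕ) : Prop :=
  ∀ m, P m → ∃ k, k ∈ kapp n m ∧ Q k

/-- Kleene realizability of a disjunction: `n ⊩ φ ∨ ψ` iff `n = ⟨0, m⟩` with `m ⊩ φ`
or `n = ⟨1, m⟩` with `m ⊩ ψ`. -/
def RDisj (P Q : ℕ → Prop) (n : ℕ) : Prop :=
  (∃ m, n = Nat.pair 0 m ∧ P m) ∨ (∃ m, n = Nat.pair 1 m ∧ Q m)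

/-- McCarty realizability validates the pairing axiom: there is `e` such that for all
trees `a, b`, `e` realizes `∃x ∀y (y ε x ↔ (y = a ∨ y = b))` (uniform quantifiers,
`↔` as the pairing of two implications). -/
theorem pairing_realized :
    ∃ e : ℕ, ∀ a b : V, ∃ x : V, ∀ y : V,
      RImp (fun m => RMem m y x)
        (RDisj (fun k => REq k y a) (fun k => REq k y b)) e.unpair.1 ∧
      RImp (RDisj (fun k => REq k y a) (fun k => REq k y b))
        (fun m => RMem m y x) e.unpair.2 := by
  classical
  set c : ℕ := Encodable.encode Nat.Partrec.Code.id with hc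
  have hk : ∀ m : ℕ, kapp c m = Part.some m := by
    intro m
    simp [kapp, hc, Nat.Partrec.Code.eval_id]
  refine ⟨Nat.pair c c, ?_⟩
  intro a b
  refine ⟨V.sup Bool (fun i => if i then (1, b) else (0, a)), ?_⟩
  intro y
  simp only [Nat.unpair_pair]
  constructor
  · intro m hm
    refine ⟨m, by simp [hk], ?_⟩
    rcases hm with ⟨n, x, w, v, h, h2⟩
    rcases h with ⟨i, hi⟩
    cases i <;> simp at hi
    · left
      exact ⟨m.unpair.2, by rw [hi.1, Nat.pair_unpair], hi.2 ▸ h2⟩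
    · right
      exact ⟨m.unpair.2, by rw [hi.1, Nat.pair_unpair], hi.2 ▸ h2⟩
  · intro m hm
    refine ⟨m, by simp [hk], ?_⟩
    rcases hm with ⟨k, hk1, hk2⟩ | ⟨k, hk1, hk2⟩
    · refine RMem.intro m y _ a ⟨false, by simp [hk1]⟩ ?_
      simpa [hk1] using hk2
    · refine RMem.intro m y _ b ⟨true, by simp [hk1]⟩ ?_
      simpa [hk1] using hk2
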